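/- arXiv:2003.09703 — 2 statements merged into one kernel-verified Lean document; each statement's English description precedes it below -/
import Mathlib

section
/- Let ν be a non-degenerate probability measure on ℝ with support bounded from above and let B = B(ν) = max(0, sup supp(ν)). Then lim_{z→B⁺} K_ν(z) = m₊(ν), i.e. the limit of the K-transform as z decreases to B exists and equals the right endpoint of the domain of means, m₊(ν) = B − lim_{z→B⁺} 1/G_ν(z) = sup_{θ ∈ (0,θ₊)} k_ν(θ). -/
/-!
For `z > B` the resolvent identity
`G(z₂) - G(z₁) = (z₁ - z₂) ∫ (z₁ - x)⁻¹ (z₂ - x)⁻¹ dν(x)`, combined with Chebyshev's integral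
inequality for the two kernels `x ↦ (zᵢ - x)⁻¹` (both increasing on the support of `ν`), gives
`z₁ - z₂ ≤ 1/G(z₁) - 1/G(z₂)` for `B < z₂ ≤ z₁`. So `1/G` is nonnegative and increasing on
`(B, ∞)` and has a right limit `L` at `B`, while `K = z - 1/G` is decreasing there, so its right
limit `B - L` is its supremum. Finally `k_ν(θ) = K_ν(1/θ)`, and `θ ↦ 1/θ` maps `(0, θ₊)` onto
`(B, ∞)`.
-/

open MeasureTheory Filter Topology Set

/-- The Cauchy transform `G_ν(z) = ∫ 1/(z-x) dν(x)` of a measure on `ℝ`, for real `z`. -/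
noncomputable def cauchyT (ν : Measure ℝ) (z : ℝ) : ℝ := ∫ x, (z - x)⁻¹ ∂ν

/-- The K-transform (self-energy) `K_ν(z) = z - 1/G_ν(z)`. -/
noncomputable def kT (ν : Measure ℝ) (z : ℝ) : ℝ := z - (cauchyT ν z)⁻¹

/-- `M_ν(θ) = ∫ 1/(1-θx) dν(x)`. -/
noncomputable def Mgen (ν : Measure ℝ) (θ : ℝ) : ℝ := ∫ x, (1 - θ * x)⁻¹ ∂ν

/-- The mean of `P_{(θ,ν)}`: `k_ν(θ) = (M_ν(θ) - 1)/(θ M_ν(θ))`. -/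
noncomputable def kMean (ν : Measure ℝ) (θ : ℝ) : ℝ := (Mgen ν θ - 1) / (θ * Mgen ν θ)

/-- `B(ν) = max(0, sup supp(ν)) = 1/θ₊`. -/
noncomputable def Bv (ν : Measure ℝ) : ℝ := max 0 (sInf {b : ℝ | ν (Set.Ioi b) = 0})

theorem measure_Ioi_sInf_eq_zero {ν : Measure ℝ} (hS : {c : ℝ | ν (Ioi c) = 0}.Nonempty) :
    ν (Ioi (sInf {c : ℝ | ν (Ioi c) = 0})) = 0 := by
  have hcover : Ioi (sInf {c : ℝ | ν (Ioi c) = 0}) ⊆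
      ⋃ q : {q : ℚ // sInf {c : ℝ | ν (Ioi c) = 0} < q}, Ioi (q : ℝ) := fun x hx ↦ by
    obtain ⟨q, hq, hqx⟩ := exists_rat_btwn (mem_Ioi.1 hx)
    exact mem_iUnion.2 ⟨⟨q, hq⟩, hqx⟩
  refine measure_mono_null hcover (measure_iUnion_null fun q ↦ ?_)
  obtain ⟨c, hc, hcq⟩ := exists_lt_of_csInf_lt hS q.2
  exact measure_mono_null (Ioi_subset_Ioi hcq.le) hc

/-- Chebyshev's integral inequality, from `∬ (f x - f y) (g x - g y) dμ dμ ≥ 0`. -/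
theorem integral_mul_integral_le_integral_mul {α : Type*} [MeasurableSpace α] [LinearOrder α]
    {μ : Measure α} [IsProbabilityMeasure μ] {s : Set α} {f g : α → ℝ} (hs : ∀ᵐ x ∂μ, x ∈ s)
    (hf : MonotoneOn f s) (hg : MonotoneOn g s) (hfi : Integrable f μ) (hgi : Integrable g μ)
    (hfgi : Integrable (fun x ↦ f x * g x) μ) :
    (∫ x, f x ∂μ) * ∫ x, g x ∂μ ≤ ∫ x, f x * g x ∂μ := by
  set A := ∫ x, f x * g x ∂μ
  set F := ∫ x, f x ∂μ
  set G := ∫ x, g x ∂μ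
  have hsection : ∀ᵐ y ∂μ, 0 ≤ A - g y * F - f y * G + f y * g y := by
    filter_upwards [hs] with y hy
    have hpair : ∀ᵐ x ∂μ, 0 ≤ (f x - f y) * (g x - g y) := by
      filter_upwards [hs] with x hx
      rcases le_total x y with hxy | hyx
      · exact mul_nonneg_of_nonpos_of_nonpos (sub_nonpos.2 (hf hx hy hxy))
          (sub_nonpos.2 (hg hx hy hxy))
      · exact mul_nonneg (sub_nonneg.2 (hf hy hx hyx)) (sub_nonneg.2 (hg hy hx hyx))
    have hexpand : ∫ x, (f x - f y) * (g x - g y) ∂μ = A - g y * F - f y * G + f y * g y := by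
      simp_rw [show ∀ x, (f x - f y) * (g x - g y)
          = f x * g x - g y * f x - f y * g x + f y * g y from fun x ↦ by ring]
      have h₁ : Integrable (fun x ↦ f x * g x - g y * f x) μ := hfgi.sub (hfi.const_mul _)
      have h₂ : Integrable (fun x ↦ f x * g x - g y * f x - f y * g x) μ :=
        h₁.sub (hgi.const_mul _)
      rw [integral_add h₂ (integrable_const _), integral_sub h₁ (hgi.const_mul _),
        integral_sub hfgi (hfi.const_mul _), integral_const_mul, integral_const_mul,
        integral_const, probReal_univ, one_smul]
    exact hexpand ▸ integral_nonneg_of_ae hpair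
  have htotal : ∫ y, (A - g y * F - f y * G + f y * g y) ∂μ = 2 * (A - F * G) := by
    have h₁ : Integrable (fun y ↦ A - g y * F) μ := (integrable_const A).sub (hgi.mul_const F)
    have h₂ : Integrable (fun y ↦ A - g y * F - f y * G) μ := h₁.sub (hfi.mul_const G)
    rw [integral_add h₂ hfgi, integral_sub h₁ (hfi.mul_const G),
      integral_sub (integrable_const A) (hgi.mul_const F), integral_mul_const, integral_mul_const,
      integral_const, probReal_univ, one_smul]
    ring
  linarith [htotal ▸ integral_nonneg_of_ae hsection]

theorem monotoneOn_inv_const_sub (z : ℝ) : MonotoneOn (fun x : ℝ ↦ (z - x)⁻¹) (Iio z) :=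
  fun _ _ _ hy hxy ↦ inv_anti₀ (sub_pos.2 hy) (sub_le_sub_left hxy z)

theorem AntitoneOn.isLUB_image_Ioi_of_tendsto {α β : Type*} [LinearOrder α] [TopologicalSpace α]
    [OrderTopology α] [LinearOrder β] [TopologicalSpace β] [OrderClosedTopology β]
    {f : α → β} {a : α} {l : β} (hf : AntitoneOn f (Ioi a))
    (hl : Tendsto f (𝓝[>] a) (𝓝 l)) [(𝓝[>] a).NeBot] : IsLUB (f '' Ioi a) l := by
  refine ⟨forall_mem_image.2 fun z hz ↦ ge_of_tendsto hl ?_, fun y hy ↦ le_of_tendsto hl ?_⟩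
  · filter_upwards [Ioo_mem_nhdsGT hz] with w hw
    exact hf hw.1 hz hw.2.le
  · filter_upwards [self_mem_nhdsWithin] with w hw
    exact hy (mem_image_of_mem f hw)

section CauchyTransform

variable {ν : Measure ℝ} {B z z₁ z₂ : ℝ}

theorem ae_le_Bv {b : ℝ} (hb : ν (Ioi b) = 0) : ∀ᵐ x ∂ν, x ≤ Bv ν := by
  refine measure_mono_null (fun x (hx : ¬x ≤ Bv ν) ↦ ?_) (measure_Ioi_sInf_eq_zero ⟨b, hb⟩)
  exact lt_of_le_of_lt (le_max_right _ _) (not_le.1 hx)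

theorem norm_inv_sub_le (hB : ∀ᵐ x ∂ν, x ≤ B) (hz : B < z) :
    ∀ᵐ x ∂ν, ‖(z - x)⁻¹‖ ≤ (z - B)⁻¹ := by
  filter_upwards [hB] with x hx
  rw [norm_inv, Real.norm_of_nonneg (by linarith)]
  exact inv_anti₀ (sub_pos.2 hz) (by linarith)

theorem integrable_inv_sub [IsFiniteMeasure ν] (hB : ∀ᵐ x ∂ν, x ≤ B) (hz : B < z) :
    Integrable (fun x ↦ (z - x)⁻¹) ν :=
  (integrable_const _).mono' (by fun_prop) (norm_inv_sub_le hB hz)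

theorem cauchyT_pos [IsFiniteMeasure ν] [NeZero ν] (hB : ∀ᵐ x ∂ν, x ≤ B) (hz : B < z) :
    0 < cauchyT ν z := by
  have hpos : ∀ᵐ x ∂ν, 0 < (z - x)⁻¹ := by
    filter_upwards [hB] with x hx
    exact inv_pos.2 (by linarith)
  refine (integral_pos_iff_support_of_nonneg_ae (hpos.mono fun _ h ↦ h.le)
    (integrable_inv_sub hB hz)).2 (pos_iff_ne_zero.2 fun h ↦ ?_)
  obtain ⟨x, hx, hx'⟩ := (hpos.and (measure_eq_zero_iff_ae_notMem.1 h)).exists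
  exact hx' hx.ne'

theorem cauchyT_sub_cauchyT [IsFiniteMeasure ν] (hB : ∀ᵐ x ∂ν, x ≤ B) (h₁ : B < z₁)
    (h₂ : B < z₂) :
    cauchyT ν z₂ - cauchyT ν z₁ = (z₁ - z₂) * ∫ x, (z₁ - x)⁻¹ * (z₂ - x)⁻¹ ∂ν := by
  rw [cauchyT, cauchyT, ← integral_sub (integrable_inv_sub hB h₂) (integrable_inv_sub hB h₁),
    ← integral_const_mul]
  refine integral_congr_ae ?_
  filter_upwards [hB] with x hx
  field_simp [show z₁ - x ≠ 0 by linarith, show z₂ - x ≠ 0 by linarith]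
  ring

theorem sub_le_inv_cauchyT_sub_inv_cauchyT [IsProbabilityMeasure ν] (hB : ∀ᵐ x ∂ν, x ≤ B)
    (h₂ : B < z₂) (h₁₂ : z₂ ≤ z₁) :
    z₁ - z₂ ≤ (cauchyT ν z₁)⁻¹ - (cauchyT ν z₂)⁻¹ := by
  have h₁ : B < z₁ := h₂.trans_le h₁₂
  have hB' : ∀ᵐ x ∂ν, x ∈ Iio z₂ := hB.mono fun x hx ↦ mem_Iio.2 (hx.trans_lt h₂)
  have hchebyshev : cauchyT ν z₁ * cauchyT ν z₂ ≤ ∫ x, (z₁ - x)⁻¹ * (z₂ - x)⁻¹ ∂ν :=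
    integral_mul_integral_le_integral_mul hB'
      ((monotoneOn_inv_const_sub z₁).mono (Iio_subset_Iio h₁₂)) (monotoneOn_inv_const_sub z₂)
      (integrable_inv_sub hB h₁) (integrable_inv_sub hB h₂)
      ((integrable_inv_sub hB h₂).bdd_mul (by fun_prop) (norm_inv_sub_le hB h₁))
  have hG₁ := cauchyT_pos hB h₁
  have hG₂ := cauchyT_pos hB h₂
  rw [inv_sub_inv hG₁.ne' hG₂.ne', le_div_iff₀ (by positivity), cauchyT_sub_cauchyT hB h₁ h₂]
  exact mul_le_mul_of_nonneg_left hchebyshev (sub_nonneg.2 h₁₂)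

theorem monotoneOn_inv_cauchyT [IsProbabilityMeasure ν] (hB : ∀ᵐ x ∂ν, x ≤ B) :
    MonotoneOn (fun z ↦ (cauchyT ν z)⁻¹) (Ioi B) := fun _ h₂ _ _ h₁₂ ↦
  sub_nonneg.1 ((sub_nonneg.2 h₁₂).trans (sub_le_inv_cauchyT_sub_inv_cauchyT hB h₂ h₁₂))

theorem antitoneOn_kT [IsProbabilityMeasure ν] (hB : ∀ᵐ x ∂ν, x ≤ B) :
    AntitoneOn (kT ν) (Ioi B) := fun _ h₂ _ _ h₁₂ ↦ by
  have := sub_le_inv_cauchyT_sub_inv_cauchyT hB h₂ h₁₂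
  simp only [kT]
  linarith

theorem exists_tendsto_inv_cauchyT [IsProbabilityMeasure ν] (hB : ∀ᵐ x ∂ν, x ≤ B) :
    ∃ L, 0 ≤ L ∧ Tendsto (fun z ↦ (cauchyT ν z)⁻¹) (𝓝[>] B) (𝓝 L) := by
  have hnonneg : ∀ z ∈ Ioi B, 0 ≤ (cauchyT ν z)⁻¹ := fun z hz ↦ (inv_pos.2 (cauchyT_pos hB hz)).le
  have hlim := (monotoneOn_inv_cauchyT hB).tendsto_nhdsGT
    ⟨0, forall_mem_image.2 hnonneg⟩
  exact ⟨_, ge_of_tendsto hlim (eventually_nhdsWithin_of_forall hnonneg), hlim⟩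

theorem Mgen_eq_inv_mul_cauchyT {θ : ℝ} (hθ : θ ≠ 0) :
    Mgen ν θ = θ⁻¹ * cauchyT ν θ⁻¹ := by
  rw [Mgen, cauchyT, ← integral_const_mul]
  congr 1 with x
  rw [← mul_inv, mul_sub, mul_inv_cancel₀ hθ]

theorem kMean_eq_kT_inv {θ : ℝ} (hθ : θ ≠ 0) (hG : cauchyT ν θ⁻¹ ≠ 0) :
    kMean ν θ = kT ν θ⁻¹ := by
  rw [kMean, kT, Mgen_eq_inv_mul_cauchyT hθ]
  generalize cauchyT ν θ⁻¹ = G at hG ⊢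
  field_simp

theorem image_kMean_eq_image_kT [IsProbabilityMeasure ν] (hB0 : 0 ≤ B)
    (hB : ∀ᵐ x ∂ν, x ≤ B) :
    kMean ν '' {θ : ℝ | 0 < θ ∧ θ * B < 1} = kT ν '' Ioi B := by
  have hdomain : {θ : ℝ | 0 < θ ∧ θ * B < 1} = Inv.inv '' Ioi B := by
    rw [image_inv_eq_inv]
    ext θ
    simp only [mem_ofPred_eq, Set.mem_inv, mem_Ioi]
    refine ⟨fun ⟨hθ, hθB⟩ ↦ ?_, fun h ↦ ?_⟩
    · simpa using (lt_inv_mul_iff₀ (b := 1) hθ).2 (by simpa using hθB)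
    · have hθ : 0 < θ := inv_pos.1 (hB0.trans_lt h)
      exact ⟨hθ, by simpa using (lt_inv_mul_iff₀ (b := 1) hθ).1 (by simpa using h)⟩
  rw [hdomain, image_image]
  refine image_congr fun z hz ↦ ?_
  have hz0 : z ≠ 0 := (hB0.trans_lt hz).ne'
  rw [kMean_eq_kT_inv (inv_ne_zero hz0) (by rw [inv_inv]; exact (cauchyT_pos hB hz).ne'),
    inv_inv]

end CauchyTransform

theorem kTransform_tendsto_mplus_general
    (ν : Measure ℝ) [IsProbabilityMeasure ν]
    (b : ℝ) (hb : ν (Set.Ioi b) = 0) :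
    ∃ L : ℝ, 0 ≤ L ∧
      Tendsto (fun z : ℝ => (cauchyT ν z)⁻¹) (𝓝[>] (Bv ν)) (𝓝 L) ∧
      Tendsto (kT ν) (𝓝[>] (Bv ν)) (𝓝 (Bv ν - L)) ∧
      IsLUB (kMean ν '' {θ : ℝ | 0 < θ ∧ θ * Bv ν < 1}) (Bv ν - L) := by
  have hB0 : 0 ≤ Bv ν := le_max_left _ _
  have hB := ae_le_Bv hb
  obtain ⟨L, hL, hinv⟩ := exists_tendsto_inv_cauchyT hB
  have hkT : Tendsto (kT ν) (𝓝[>] (Bv ν)) (𝓝 (Bv ν - L)) :=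
    (tendsto_id.mono_left nhdsWithin_le_nhds).sub hinv
  refine ⟨L, hL, hinv, hkT, ?_⟩
  rw [image_kMean_eq_image_kT hB0 hB]
  exact (antitoneOn_kT hB).isLUB_image_Ioi_of_tendsto hkT

/-- for a non-degenerate probability measure `ν` with support bounded from
above and `B = B(ν) = max(0, sup supp ν)`, the limit of the K-transform as `z ↓ B`
exists and equals `m₊(ν) = B - lim_{z→B⁺} 1/G_ν(z)`, which is the supremum of the mean
function `k_ν` over `(0, θ₊)` (encoded as `{θ | 0 < θ ∧ θ B(ν) < 1}`). -/
theorem kTransform_tendsto_mplus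
    (ν : Measure ℝ) [IsProbabilityMeasure ν]
    (hnd : ∀ a : ℝ, ν ≠ Measure.dirac a)
    (b : ℝ) (hb : ν (Set.Ioi b) = 0) :
    ∃ L : ℝ, 0 ≤ L ∧
      Tendsto (fun z : ℝ => (cauchyT ν z)⁻¹) (𝓝[>] (Bv ν)) (𝓝 L) ∧
      Tendsto (kT ν) (𝓝[>] (Bv ν)) (𝓝 (Bv ν - L)) ∧
      IsLUB (kMean ν '' {θ : ℝ | 0 < θ ∧ θ * Bv ν < 1}) (Bv ν - L) :=
  kTransform_tendsto_mplus_general ν b hb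
end

section
/- Let ν be a non-degenerate probability measure on ℝ with support bounded from above and α > 0 such that the measure (ν^{⊎1/α})^{⊞α} is well defined. Then (ν^{⊎1/α})^{⊞α} has support bounded from above and its pseudo-variance function satisfies, for m in a right neighborhood of m₀(ν): 𝕍_{(ν^{⊎1/α})^{⊞α}}(m) = 𝕍_ν(m) + (1 − 1/α)m². If moreover the mean m₀ = m₀(ν) is finite, the variance functions exist and V_{(ν^{⊎1/α})^{⊞α}}(m) = V_ν(m) + (1 − 1/α)m(m − m₀) for m in a right neighborhood of m₀. -/
/-!
Boolean powers act linearly on K-transforms and free powers act by `𝕍 ↦ β 𝕍(·/β)` on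
pseudo-variances, so everything reduces to transporting `K_μ = α⁻¹ K_ν` from the upper
half-plane to the real axis beyond the supports, where `k_ρ(θ) = K_ρ(1/θ)`.

The only real difficulty is that `supp μ` must first be shown to be bounded above. For `t`
beyond `supp ν` the identity `1/G_μ(z) = (1 - 1/α) z + (1/α)/G_ν(z)` keeps `1/G_μ(t + iy)`
within `O(y)` of a real number `≥ 2`, so `-Im G_μ(t + iy) = O(y)`; comparing with the Poisson
kernel, `μ` gives mass `O(y²)` to every window `(t - y, t + y)`, and covering an interval by
`n` such windows shows that it is `μ`-null.

Then `k_μ = k_ν / α` near `0⁺`, so `ψ_μ(m/α) = ψ_ν(m)` and `α 𝕍_μ(m/α) = 𝕍_ν(m) + (1 - 1/α) m²`.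
Every `m` slightly above `m₀` is a value of `k_ν` because `k_ν` is continuous and, `ν` not
being a Dirac mass, strictly increasing.
-/

open MeasureTheory Filter Topology Set

/-- The Cauchy transform at a complex argument. -/
noncomputable def cauchyTC (ν : Measure ℝ) (z : ℂ) : ℂ := ∫ x, (z - (x : ℂ))⁻¹ ∂ν

/-- The K-transform at a complex argument. -/
noncomputable def kTC (ν : Measure ℝ) (z : ℂ) : ℂ := z - (cauchyTC ν z)⁻¹

/-- Pseudo-variance function `𝕍_ν(m) = m (1/ψ_ν(m) - m)`, expressed through the
inverse `ψ` of the mean parametrization `k_ν`. -/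
noncomputable def pseudoVar (ψ : ℝ → ℝ) (m : ℝ) : ℝ := m * ((ψ m)⁻¹ - m)

open Complex

lemma integral_pos_of_ae_pos {α : Type*} [MeasurableSpace α] {ρ : Measure α} [NeZero ρ]
    {f : α → ℝ} (hf : ∀ᵐ x ∂ρ, 0 < f x) (hfi : Integrable f ρ) : 0 < ∫ x, f x ∂ρ := by
  rw [integral_pos_iff_support_of_nonneg_ae (hf.mono fun _ h => h.le) hfi]
  refine pos_iff_ne_zero.2 fun h0 => ?_
  obtain ⟨x, hx, hx'⟩ := (hf.and (measure_eq_zero_iff_ae_notMem.1 h0)).exists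
  exact hx' hx.ne'

lemma eq_dirac_of_ae_eq {ρ : Measure ℝ} [IsProbabilityMeasure ρ] {a : ℝ}
    (h : ∀ᵐ x ∂ρ, x = a) : ρ = Measure.dirac a := by
  have hmem : ∀ᵐ x ∂ρ, x ∈ ({a} : Finset ℝ) := by simpa using h
  have ha : ρ {a} = 1 := by
    rw [← measure_univ (μ := ρ)]
    exact (ae_mem_iff_measure_eq (measurableSet_singleton a).nullMeasurableSet).1 (by simpa using h)
  rw [Measure.ae_mem_finset_iff.1 hmem]
  simp [ha]

lemma integral_pos_of_ae_nonneg_of_ne_dirac {ρ : Measure ℝ} [IsProbabilityMeasure ρ] {x₀ : ℝ}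
    (hnd : ρ ≠ Measure.dirac x₀) {f : ℝ → ℝ} (hf : Integrable f ρ)
    (h : ∀ᵐ x ∂ρ, 0 ≤ f x ∧ (f x = 0 → x = x₀)) : 0 < ∫ x, f x ∂ρ := by
  have hnonneg : 0 ≤ᵐ[ρ] f := h.mono fun x hx => hx.1
  refine (integral_nonneg_of_ae hnonneg).lt_of_ne fun h0 => hnd (eq_dirac_of_ae_eq ?_)
  filter_upwards [(integral_eq_zero_iff_of_nonneg_ae hnonneg hf).1 h0.symm, h] with x hx0 hx
  exact hx.2 hx0

lemma measureReal_Ioo_le_integral_poisson {ρ : Measure ℝ} [IsFiniteMeasure ρ] (t : ℝ) {y : ℝ}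
    (hy : 0 < y) : ρ.real (Ioo (t - y) (t + y)) ≤ 2 * y * ∫ x, y / ((t - x) ^ 2 + y ^ 2) ∂ρ := by
  have hint : Integrable (fun x : ℝ => y / ((t - x) ^ 2 + y ^ 2)) ρ := by
    refine Integrable.mono' (integrable_const y⁻¹) (Measurable.aestronglyMeasurable (by fun_prop))
      (Eventually.of_forall fun x => ?_)
    rw [Real.norm_of_nonneg (by positivity), div_le_iff₀ (by positivity)]
    field_simp
    nlinarith [sq_nonneg (t - x)]
  have hind : ∫ x, (Ioo (t - y) (t + y)).indicator (fun _ => (2 * y)⁻¹) x ∂ρ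
      ≤ ∫ x, y / ((t - x) ^ 2 + y ^ 2) ∂ρ := by
    refine integral_mono ((integrable_const _).indicator measurableSet_Ioo) hint fun x => ?_
    by_cases hx : x ∈ Ioo (t - y) (t + y)
    · rw [indicator_of_mem hx, inv_le_iff_one_le_mul₀ (by positivity), div_mul_eq_mul_div,
        le_div_iff₀ (by positivity)]
      nlinarith [hx.1, hx.2]
    · rw [indicator_of_notMem hx]
      positivity
  rw [integral_indicator_const _ measurableSet_Ioo, smul_eq_mul] at hind
  rw [← inv_mul_le_iff₀ (by positivity)]
  simpa [mul_comm] using hind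

lemma measureReal_Ioc_le_of_measureReal_Ioo_le {μ : Measure ℝ} [IsFiniteMeasure μ]
    {c y B : ℝ} {n : ℕ} (hy : 0 < y)
    (h : ∀ k < n, μ.real (Ioo (c + (k + 1) * y - y) (c + (k + 1) * y + y)) ≤ B) :
    μ.real (Ioc c (c + n * y)) ≤ n * B := by
  induction n with
  | zero => simp
  | succ n ih =>
    have hcover : Ioc c (c + (n + 1 : ℕ) * y) ⊆
        Ioc c (c + n * y) ∪ Ioo (c + (n + 1) * y - y) (c + (n + 1) * y + y) := by
      intro x hx
      rcases le_or_gt x (c + n * y) with hxn | hxn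
      · exact Or.inl ⟨hx.1, hxn⟩
      · exact Or.inr ⟨by linarith, by push_cast at hx; linarith [hx.2]⟩
    calc μ.real (Ioc c (c + (n + 1 : ℕ) * y))
        ≤ μ.real (Ioc c (c + n * y)) + μ.real (Ioo (c + (n + 1) * y - y) (c + (n + 1) * y + y)) :=
          (measureReal_mono hcover).trans (measureReal_union_le _ _)
      _ ≤ n * B + B := add_le_add (ih fun k hk => h k (by omega)) (h n (by omega))
      _ = (n + 1 : ℕ) * B := by push_cast; ring

lemma measure_Ioc_eq_zero_of_measureReal_Ioo_le {μ : Measure ℝ} [IsFiniteMeasure μ]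
    {c R C y₀ : ℝ} (hy₀ : 0 < y₀)
    (h : ∀ t ∈ Icc c R, ∀ y ∈ Ioc 0 y₀, μ.real (Ioo (t - y) (t + y)) ≤ C * y ^ 2) :
    μ (Ioc c R) = 0 := by
  rcases le_or_gt R c with hRc | hcR
  · simp [Ioc_eq_empty_of_le hRc]
  have hstep : ∀ n : ℕ, 0 < n → (R - c) / n ≤ y₀ → μ.real (Ioc c R) ≤ C * (R - c) ^ 2 / n := by
    intro n hn hny
    set y := (R - c) / n with hy_def
    have hy : 0 < y := div_pos (by linarith) (by exact_mod_cast hn)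
    have hR : c + n * y = R := by rw [hy_def]; field_simp; ring
    have := measureReal_Ioc_le_of_measureReal_Ioo_le (μ := μ) (c := c) (n := n) (B := C * y ^ 2) hy
      fun k hk => by
        have hk' : (k : ℝ) + 1 ≤ n := by exact_mod_cast Nat.succ_le_of_lt hk
        exact h _ ⟨by nlinarith, by nlinarith⟩ _ ⟨hy, hny⟩
    rwa [hR, show (n : ℝ) * (C * y ^ 2) = C * (R - c) ^ 2 / n by rw [← hR]; field_simp; ring]
      at this
  have hev : ∀ᶠ n : ℕ in atTop, μ.real (Ioc c R) ≤ C * (R - c) ^ 2 / n := by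
    obtain ⟨N, hN⟩ := exists_nat_ge ((R - c) / y₀)
    filter_upwards [eventually_ge_atTop (max N 1)] with n hn
    have hn1 : (1 : ℝ) ≤ n := by exact_mod_cast (le_max_right N 1).trans hn
    have hNn : (N : ℝ) ≤ n := by exact_mod_cast (le_max_left N 1).trans hn
    refine hstep n (by exact_mod_cast hn1) ?_
    rw [div_le_iff₀ (by linarith)]
    rw [div_le_iff₀ hy₀] at hN
    nlinarith
  have hle := ge_of_tendsto (tendsto_const_div_atTop_nhds_zero_nat _) hev
  exact (measureReal_eq_zero_iff (measure_ne_top _ _)).1 (le_antisymm hle measureReal_nonneg)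

lemma measure_Ioi_eq_zero_of_forall_measure_Ioc {μ : Measure ℝ} {c : ℝ}
    (h : ∀ R, c < R → μ (Ioc c R) = 0) : μ (Ioi c) = 0 := by
  refine measure_mono_null (fun x hx => mem_iUnion.2 ?_)
    (measure_iUnion_null fun n : ℕ => h (c + n + 1) (by linarith [n.cast_nonneg (α := ℝ)]))
  obtain ⟨n, hn⟩ := exists_nat_ge (x - c)
  exact ⟨n, hx, by linarith⟩

lemma neg_im_inv_le_norm_sub (W : ℂ) (w : ℝ) (h : 1 + ‖W - w‖ ≤ w) : -(W⁻¹).im ≤ ‖W - w‖ := by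
  have hW : 1 ≤ ‖W‖ := by
    have := norm_sub_norm_le (w : ℂ) W
    rw [norm_sub_rev, norm_real, Real.norm_of_nonneg (by linarith [norm_nonneg (W - w)])] at this
    linarith
  have hn : 1 ≤ normSq W := by rw [normSq_eq_norm_sq]; nlinarith
  calc -(W⁻¹).im = W.im / normSq W := by rw [inv_im, neg_div, neg_neg]
    _ ≤ |W.im| / normSq W := div_le_div_of_nonneg_right (le_abs_self _) (by linarith)
    _ ≤ |W.im| := div_le_self (abs_nonneg _) hn
    _ ≤ ‖W - w‖ := by simpa using abs_im_le_norm (W - w)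

lemma StrictMonoOn.exists_eq_of_tendsto_nhdsGT {f : ℝ → ℝ} {a l : ℝ} (ha : 0 < a)
    (hf : StrictMonoOn f (Ioo 0 a)) (hfc : ContinuousOn f (Ioo 0 a))
    (hl : Tendsto f (𝓝[>] 0) (𝓝 l)) :
    ∃ ε > 0, ∀ m, l < m → m < l + ε → ∃ θ ∈ Ioo 0 a, f θ = m := by
  have hmem : ∀ {θ}, 0 < θ → θ ≤ a / 2 → θ ∈ Ioo 0 a := fun h₀ h₁ => ⟨h₀, by linarith⟩
  have hla : l < f (a / 2) := by
    have hle : l ≤ f (a / 4) := by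
      refine le_of_tendsto hl ?_
      filter_upwards [Ioo_mem_nhdsGT (by positivity : (0 : ℝ) < a / 4)] with θ hθ
      exact (hf (hmem hθ.1 (by linarith [hθ.2])) (hmem (by positivity) (by linarith)) hθ.2).le
    linarith [hf (hmem (by positivity) (by linarith)) (hmem (by positivity) le_rfl)
      (by linarith : a / 4 < a / 2)]
  refine ⟨f (a / 2) - l, by linarith, fun m hlm hm => ?_⟩
  obtain ⟨θ₀, hθ₀m, hθ₀⟩ :=
    ((hl.eventually (eventually_lt_nhds hlm)).and (Ioo_mem_nhdsGT (half_pos ha))).exists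
  obtain ⟨θ, hθ, rfl⟩ := intermediate_value_Icc hθ₀.2.le
    (hfc.mono fun s hs => hmem (hθ₀.1.trans_le hs.1) hs.2) ⟨hθ₀m.le, by linarith⟩
  exact ⟨θ, hmem (hθ₀.1.trans_le hθ.1) hθ.2, rfl⟩

section CauchyTransform

variable {ρ : Measure ℝ} {b t : ℝ}

lemma ae_le_of_measure_Ioi_eq_zero (hb : ρ (Ioi b) = 0) : ∀ᵐ x ∂ρ, x ≤ b := by
  rw [ae_iff]
  simp only [not_le]
  exact hb

lemma Bv_le_max (hb : ρ (Ioi b) = 0) : Bv ρ ≤ max 0 b := by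
  by_cases hbdd : BddBelow {b : ℝ | ρ (Ioi b) = 0}
  · exact max_le_max le_rfl (csInf_le hbdd hb)
  · simp [Bv, Real.sInf_of_not_bddBelow hbdd]

lemma mul_Bv_lt_one {θ : ℝ} (hb : ρ (Ioi b) = 0) (hθ : 0 < θ) (hbθ : b < θ⁻¹) :
    θ * Bv ρ < 1 := by
  calc θ * Bv ρ ≤ θ * max 0 b := mul_le_mul_of_nonneg_left (Bv_le_max hb) hθ.le
    _ < 1 := by
      rcases le_total b 0 with h | h
      · simp [max_eq_left h]
      · rwa [max_eq_right h, ← lt_inv_mul_iff₀ hθ, mul_one]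

lemma ofReal_cauchyT : (cauchyT ρ t : ℂ) = cauchyTC ρ t := by
  rw [cauchyT, cauchyTC, ← integral_complex_ofReal]
  push_cast
  rfl

lemma integrable_inv_sub_s12 [IsFiniteMeasure ρ] (hb : ρ (Ioi b) = 0) (ht : b < t) :
    Integrable (fun x : ℝ => (t - x)⁻¹) ρ := by
  refine Integrable.mono' (integrable_const (t - b)⁻¹)
    (measurable_const.sub measurable_id).inv.aestronglyMeasurable ?_
  filter_upwards [ae_le_of_measure_Ioi_eq_zero hb] with x hx
  rw [Real.norm_eq_abs, abs_of_pos (inv_pos.2 (by linarith))]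
  exact inv_anti₀ (by linarith) (by linarith)

lemma integrable_inv_sub_ofReal [IsFiniteMeasure ρ] (hb : ρ (Ioi b) = 0) {z : ℂ}
    (hz : b < z.re) : Integrable (fun x : ℝ => (z - x)⁻¹) ρ := by
  refine Integrable.mono' (integrable_const (z.re - b)⁻¹) (by fun_prop) ?_
  filter_upwards [ae_le_of_measure_Ioi_eq_zero hb] with x hx
  rw [norm_inv]
  exact inv_anti₀ (by linarith) ((by linarith : z.re - b ≤ z.re - x).trans
    (by simpa using re_le_norm (z - x)))

lemma integrable_inv_sub_ofReal_of_im_pos [IsFiniteMeasure ρ] {z : ℂ} (hz : 0 < z.im) :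
    Integrable (fun x : ℝ => (z - x)⁻¹) ρ := by
  refine Integrable.mono' (integrable_const z.im⁻¹) (by fun_prop) (Eventually.of_forall fun x => ?_)
  rw [norm_inv]
  exact inv_anti₀ hz (by simpa using im_le_norm (z - x))

lemma neg_im_cauchyTC [IsFiniteMeasure ρ] (t : ℝ) {y : ℝ} (hy : 0 < y) :
    -(cauchyTC ρ (t + y * I)).im = ∫ x, y / ((t - x) ^ 2 + y ^ 2) ∂ρ := by
  have hint := integrable_inv_sub_ofReal_of_im_pos (ρ := ρ) (z := t + y * I) (by simpa using hy)
  have him := integral_im hint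
  simp only [RCLike.im_to_complex] at him
  rw [cauchyTC, ← him, ← integral_neg]
  congr with x
  rw [inv_im, normSq_apply]
  simp only [sub_im, add_im, ofReal_im, mul_im, I_re, I_im, sub_re, add_re, ofReal_re, mul_re]
  ring

variable [IsProbabilityMeasure ρ]

lemma cauchyT_pos_s12 (hb : ρ (Ioi b) = 0) (ht : b < t) : 0 < cauchyT ρ t := by
  refine integral_pos_of_ae_pos ?_ (integrable_inv_sub_s12 hb ht)
  filter_upwards [ae_le_of_measure_Ioi_eq_zero hb] with x hx
  exact inv_pos.2 (by linarith)

lemma cauchyT_le_cauchyT {s : ℝ} (hb : ρ (Ioi b) = 0) (ht : b < t) (hts : t ≤ s) :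
    cauchyT ρ s ≤ cauchyT ρ t := by
  refine integral_mono_ae (integrable_inv_sub_s12 hb (ht.trans_le hts)) (integrable_inv_sub_s12 hb ht) ?_
  filter_upwards [ae_le_of_measure_Ioi_eq_zero hb] with x hx
  exact inv_anti₀ (by linarith) (by linarith)

lemma kT_le (hb : ρ (Ioi b) = 0) (ht : b < t) : kT ρ t ≤ b := by
  have hG : cauchyT ρ t ≤ (t - b)⁻¹ := by
    calc cauchyT ρ t ≤ ∫ _, (t - b)⁻¹ ∂ρ := by
          refine integral_mono_ae (integrable_inv_sub_s12 hb ht) (integrable_const _) ?_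
          filter_upwards [ae_le_of_measure_Ioi_eq_zero hb] with x hx
          exact inv_anti₀ (by linarith) (by linarith)
      _ = (t - b)⁻¹ := by simp
  have := (le_inv_comm₀ (cauchyT_pos_s12 hb ht) (by linarith)).1 hG
  rw [kT]
  linarith

lemma kMean_eq_kT {θ : ℝ} (hb : ρ (Ioi b) = 0) (hθ : 0 < θ) (hbθ : b < θ⁻¹) :
    kMean ρ θ = kT ρ θ⁻¹ := by
  have hG := cauchyT_pos_s12 hb hbθ
  have hM : Mgen ρ θ = θ⁻¹ * cauchyT ρ θ⁻¹ := by
    rw [Mgen, cauchyT, ← integral_const_mul]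
    congr 1 with x
    rw [← mul_inv, mul_sub, mul_inv_cancel₀ hθ.ne']
  rw [kMean, kT, hM]
  generalize cauchyT ρ θ⁻¹ = G at hG ⊢
  field_simp

lemma continuousAt_kT (hb : ρ (Ioi b) = 0) (ht : b < t) : ContinuousAt (kT ρ) t := by
  have hae := ae_le_of_measure_Ioi_eq_zero hb
  have hG : ContinuousAt (cauchyT ρ) t := by
    refine continuousAt_of_dominated
      (Eventually.of_forall fun s => (measurable_const.sub measurable_id).inv.aestronglyMeasurable)
      ?_ (integrable_const ((t - b) / 2)⁻¹) ?_
    · filter_upwards [Ioi_mem_nhds (by linarith : (t + b) / 2 < t)] with s hs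
      filter_upwards [hae] with x hx
      rw [Real.norm_eq_abs, abs_of_pos (inv_pos.2 (by linarith [mem_Ioi.1 hs]))]
      exact inv_anti₀ (by linarith) (by linarith [mem_Ioi.1 hs])
    · filter_upwards [hae] with x hx
      exact ContinuousAt.inv₀ (by fun_prop) (sub_pos.2 (by linarith : x < t)).ne'
  exact continuousAt_id.sub (hG.inv₀ (cauchyT_pos_s12 hb ht).ne')

lemma norm_cauchyTC_sub_cauchyT_le (hb : ρ (Ioi b) = 0) (ht : b < t) (y : ℝ) :
    ‖cauchyTC ρ (t + y * I) - cauchyT ρ t‖ ≤ |y| / (t - b) ^ 2 := by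
  have hre : b < ((t : ℂ) + y * I).re := by simpa using ht
  rw [ofReal_cauchyT, cauchyTC, cauchyTC,
    ← integral_sub (integrable_inv_sub_ofReal hb hre) (integrable_inv_sub_ofReal hb (by simpa))]
  refine (norm_integral_le_of_norm_le_const (C := |y| / (t - b) ^ 2) ?_).trans (by simp)
  filter_upwards [ae_le_of_measure_Ioi_eq_zero hb] with x hx
  have htx : 0 < t - x := by linarith
  have hzx : ((t : ℂ) + y * I) - x ≠ 0 := fun h => by simpa [htx.ne'] using congrArg re h
  have htx' : (t : ℂ) - x ≠ 0 := by exact_mod_cast htx.ne'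
  have hnum : ‖((t : ℂ) - x) - (t + y * I - x)‖ = |y| := by simp
  have hden : (t - b) ^ 2 ≤ ‖(t : ℂ) + y * I - x‖ * ‖(t : ℂ) - x‖ := by
    have h1 : t - x ≤ ‖(t : ℂ) + y * I - x‖ := by simpa using re_le_norm ((t : ℂ) + y * I - x)
    have h2 : ‖(t : ℂ) - x‖ = t - x := by
      rw [← ofReal_sub, norm_real, Real.norm_of_nonneg htx.le]
    rw [h2, sq]
    exact mul_le_mul (by linarith) (by linarith) (by linarith) (norm_nonneg _)
  rw [inv_sub_inv hzx htx', norm_div, norm_mul, hnum]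
  exact div_le_div_of_nonneg_left (abs_nonneg y) (by nlinarith) hden

lemma tendsto_kTC_add_mul_I (hb : ρ (Ioi b) = 0) (ht : b < t) :
    Tendsto (fun y : ℝ => kTC ρ (t + y * I)) (𝓝 0) (𝓝 (kT ρ t)) := by
  have hG : Tendsto (fun y : ℝ => cauchyTC ρ (t + y * I)) (𝓝 0) (𝓝 (cauchyT ρ t)) := by
    rw [tendsto_iff_norm_sub_tendsto_zero]
    refine squeeze_zero (fun _ => norm_nonneg _) (norm_cauchyTC_sub_cauchyT_le hb ht) ?_
    simpa using ((by fun_prop : Continuous fun y : ℝ => |y| / (t - b) ^ 2).tendsto 0)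
  have hz : Tendsto (fun y : ℝ => (t : ℂ) + y * I) (𝓝 0) (𝓝 t) := by
    simpa using ((by fun_prop : Continuous fun y : ℝ => (t : ℂ) + y * I).tendsto 0)
  rw [kT, ofReal_sub, ofReal_inv]
  exact hz.sub (hG.inv₀ (by exact_mod_cast (cauchyT_pos_s12 hb ht).ne'))

lemma norm_inv_cauchyTC_sub_inv_cauchyT_le {R y : ℝ} (hb : ρ (Ioi b) = 0) (hbt : b + 1 ≤ t)
    (htR : t ≤ R) (hy : 0 < y) (hyR : y ≤ cauchyT ρ R / 2) :
    ‖(cauchyTC ρ (t + y * I))⁻¹ - (cauchyT ρ t : ℂ)⁻¹‖ ≤ 2 * y / cauchyT ρ R ^ 2 := by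
  set g := cauchyT ρ R
  have hg : 0 < g := cauchyT_pos_s12 hb (by linarith)
  have hgt : g ≤ cauchyT ρ t := cauchyT_le_cauchyT hb (by linarith) htR
  have hdist : ‖cauchyTC ρ (t + y * I) - cauchyT ρ t‖ ≤ y := by
    refine (norm_cauchyTC_sub_cauchyT_le hb (by linarith) y).trans ?_
    rw [abs_of_pos hy]
    exact div_le_self hy.le (by nlinarith)
  have hGz : g / 2 ≤ ‖cauchyTC ρ (t + y * I)‖ := by
    have := norm_sub_norm_le (cauchyT ρ t : ℂ) (cauchyTC ρ (t + y * I))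
    rw [norm_sub_rev, norm_real, Real.norm_of_nonneg (by linarith)] at this
    linarith
  have hGz0 : cauchyTC ρ (t + y * I) ≠ 0 := norm_pos_iff.1 (by linarith)
  have hGt0 : (cauchyT ρ t : ℂ) ≠ 0 := by exact_mod_cast (by linarith : (0 : ℝ) < cauchyT ρ t).ne'
  rw [inv_sub_inv hGz0 hGt0, norm_div, norm_mul, norm_sub_rev, norm_real,
    Real.norm_of_nonneg (by linarith), div_le_div_iff₀ (mul_pos (by linarith) (by linarith))
    (by positivity)]
  calc ‖cauchyTC ρ (t + y * I) - cauchyT ρ t‖ * g ^ 2 ≤ y * g ^ 2 := by gcongr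
    _ ≤ 2 * y * (g / 2 * g) := by nlinarith
    _ ≤ 2 * y * (‖cauchyTC ρ (t + y * I)‖ * cauchyT ρ t) := by gcongr

lemma mul_cauchyT_mul_cauchyT_lt (hnd : ∀ a : ℝ, ρ ≠ Measure.dirac a) (hb : ρ (Ioi b) = 0)
    {t₁ t₂ : ℝ} (h₁ : b < t₁) (h₁₂ : t₁ < t₂) :
    (t₂ - t₁) * (cauchyT ρ t₁ * cauchyT ρ t₂) < cauchyT ρ t₁ - cauchyT ρ t₂ := by
  set d := t₂ - t₁
  set a := cauchyT ρ t₁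
  set c := a / (1 + d * a)
  have hd : 0 < d := sub_pos.2 h₁₂
  have ha : 0 < a := cauchyT_pos_s12 hb h₁
  have hint₁ := integrable_inv_sub_s12 hb h₁
  have hint₂ := integrable_inv_sub_s12 hb (h₁.trans h₁₂)
  -- One-variable Chebyshev: with `f₁ = (t₁ - ·)⁻¹` and `f₂ = (t₂ - ·)⁻¹ = f₁ / (1 + d f₁)`,
  -- `h = (f₁ - a) (f₂ - c)` (written linearly using `f₁ f₂ = (f₁ - f₂) / d`) is a product of
  -- two increasing functions of `f₁` vanishing where `f₁ = a`, so `h ≥ 0` with equality only there.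
  let h : ℝ → ℝ := fun x => (d⁻¹ - c) * (t₁ - x)⁻¹ - (d⁻¹ + a) * (t₂ - x)⁻¹ + a * c
  have hint : Integrable h ρ :=
    ((hint₁.const_mul _).sub (hint₂.const_mul _)).add (integrable_const _)
  have hI : ∫ x, h x ∂ρ = (a - cauchyT ρ t₂) / d - a * cauchyT ρ t₂ := by
    simp only [h]
    rw [integral_add, integral_sub, integral_const_mul, integral_const_mul, integral_const]
    · simp only [probReal_univ, one_smul, c]
      rw [← cauchyT, ← cauchyT]
      field_simp
      ring
    exacts [hint₁.const_mul _, hint₂.const_mul _, (hint₁.const_mul _).sub (hint₂.const_mul _),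
      integrable_const _]
  have hpos : 0 < ∫ x, h x ∂ρ := by
    refine integral_pos_of_ae_nonneg_of_ne_dirac (hnd (t₁ - a⁻¹)) hint ?_
    filter_upwards [ae_le_of_measure_Ioi_eq_zero hb] with x hx
    have hx₁ : 0 < t₁ - x := by linarith
    have hden : 0 < (t₁ - x) * (t₂ - x) * (1 + d * a) :=
      mul_pos (mul_pos hx₁ (by linarith)) (by positivity)
    have hform : h x = (1 - a * (t₁ - x)) ^ 2 / ((t₁ - x) * (t₂ - x) * (1 + d * a)) := by
      have hda : 0 < 1 + d * a := by positivity
      have hd₂ : t₂ - x = (t₁ - x) + d := by ring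
      simp only [h, c]
      rw [hd₂]
      field_simp
      ring
    rw [hform]
    refine ⟨div_nonneg (sq_nonneg _) hden.le, fun h0 => ?_⟩
    rw [div_eq_zero_iff, or_iff_left hden.ne', sq_eq_zero_iff] at h0
    field_simp
    linarith
  rw [hI, sub_pos, lt_div_iff₀ hd] at hpos
  linarith

lemma kT_lt_kT (hnd : ∀ a : ℝ, ρ ≠ Measure.dirac a) (hb : ρ (Ioi b) = 0) {t₁ t₂ : ℝ}
    (h₁ : b < t₁) (h₁₂ : t₁ < t₂) : kT ρ t₂ < kT ρ t₁ := by
  have hG₁ := cauchyT_pos_s12 hb h₁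
  have hG₂ := cauchyT_pos_s12 hb (h₁.trans h₁₂)
  have key := mul_cauchyT_mul_cauchyT_lt hnd hb h₁ h₁₂
  have : t₂ - t₁ < (cauchyT ρ t₂)⁻¹ - (cauchyT ρ t₁)⁻¹ := by
    rw [inv_sub_inv hG₂.ne' hG₁.ne', lt_div_iff₀ (by positivity)]
    linarith
  rw [kT, kT]
  linarith

lemma strictMonoOn_kMean (hnd : ∀ a : ℝ, ρ ≠ Measure.dirac a) (hb : ρ (Ioi b) = 0)
    (hb₀ : 0 < b) : StrictMonoOn (kMean ρ) (Ioo 0 b⁻¹) := by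
  intro θ₁ hθ₁ θ₂ hθ₂ h₁₂
  have hb₂ : b < θ₂⁻¹ := (lt_inv_comm₀ hθ₂.1 hb₀).1 hθ₂.2
  rw [kMean_eq_kT hb hθ₁.1 ((lt_inv_comm₀ hθ₁.1 hb₀).1 hθ₁.2), kMean_eq_kT hb hθ₂.1 hb₂]
  exact kT_lt_kT hnd hb hb₂ (inv_strictAnti₀ hθ₁.1 h₁₂)

lemma continuousOn_kMean (hb : ρ (Ioi b) = 0) (hb₀ : 0 < b) :
    ContinuousOn (kMean ρ) (Ioo 0 b⁻¹) := by
  have hbθ : ∀ θ ∈ Ioo 0 b⁻¹, b < θ⁻¹ := fun θ hθ => (lt_inv_comm₀ hθ.1 hb₀).1 hθ.2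
  refine ContinuousOn.congr (f := fun θ => kT ρ θ⁻¹) (fun θ hθ => ?_)
    fun θ hθ => kMean_eq_kT hb hθ.1 (hbθ θ hθ)
  exact ((continuousAt_kT hb (hbθ θ hθ)).comp (continuousAt_inv₀ hθ.1.ne')).continuousWithinAt

end CauchyTransform

lemma kT_eq_of_kTC_eq {ν μ : Measure ℝ} [IsProbabilityMeasure ν] [IsProbabilityMeasure μ]
    {b t r : ℝ} (hK : ∀ z : ℂ, 0 < z.im → kTC μ z = r * kTC ν z)
    (hν : ν (Ioi b) = 0) (hμ : μ (Ioi b) = 0) (ht : b < t) : kT μ t = r * kT ν t := by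
  have hlim : Tendsto (fun y : ℝ => kTC μ (t + y * I)) (𝓝[>] 0) (𝓝 (r * kT ν t)) := by
    refine (((tendsto_kTC_add_mul_I hν ht).const_mul (r : ℂ)).mono_left
      nhdsWithin_le_nhds).congr' ?_
    filter_upwards [self_mem_nhdsWithin] with y hy
    exact (hK _ (by simpa using hy)).symm
  exact_mod_cast tendsto_nhds_unique
    ((tendsto_kTC_add_mul_I hμ ht).mono_left nhdsWithin_le_nhds) hlim

lemma kMean_eq_mul_of_kTC_eq {ν μ : Measure ℝ} [IsProbabilityMeasure ν] [IsProbabilityMeasure μ]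
    {c r θ : ℝ} (hK : ∀ z : ℂ, 0 < z.im → kTC μ z = r * kTC ν z) (hν : ν (Ioi c) = 0)
    (hμ : μ (Ioi c) = 0) (hθ : 0 < θ) (hcθ : c < θ⁻¹) : kMean μ θ = r * kMean ν θ := by
  rw [kMean_eq_kT hμ hθ hcθ, kMean_eq_kT hν hθ hcθ, kT_eq_of_kTC_eq hK hν hμ hcθ]

lemma norm_inv_cauchyTC_sub_le_of_kTC_eq {ν μ : Measure ℝ} [IsProbabilityMeasure ν]
    [IsProbabilityMeasure μ] {b r t R y : ℝ} (hr : 0 ≤ r) (hb : ν (Ioi b) = 0)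
    (hK : ∀ z : ℂ, 0 < z.im → kTC μ z = r * kTC ν z) (hbt : b + 1 ≤ t) (htR : t ≤ R)
    (hy : 0 < y) (hyR : y ≤ cauchyT ν R / 2) :
    ‖(cauchyTC μ (t + y * I))⁻¹ - (t - r * kT ν t : ℝ)‖
      ≤ (|1 - r| + r * (2 / cauchyT ν R ^ 2)) * y := by
  set z : ℂ := t + y * I
  have hW : (cauchyTC μ z)⁻¹ - (t - r * kT ν t : ℝ)
      = (1 - r : ℝ) * (y * I) + r * ((cauchyTC ν z)⁻¹ - (cauchyT ν t : ℂ)⁻¹) := by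
    have h := hK z (by simpa [z] using hy)
    rw [kTC, kTC] at h
    simp only [kT, z]
    push_cast
    linear_combination -h
  rw [hW]
  refine (norm_add_le _ _).trans ?_
  rw [norm_mul, norm_mul, norm_mul, norm_real, norm_real, norm_real, norm_I, Real.norm_eq_abs,
    Real.norm_of_nonneg hy.le, Real.norm_of_nonneg hr, mul_one]
  calc |1 - r| * y + r * ‖(cauchyTC ν z)⁻¹ - (cauchyT ν t : ℂ)⁻¹‖
      ≤ |1 - r| * y + r * (2 * y / cauchyT ν R ^ 2) := by
        gcongr
        exact norm_inv_cauchyTC_sub_inv_cauchyT_le hb hbt htR hy hyR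
    _ = (|1 - r| + r * (2 / cauchyT ν R ^ 2)) * y := by ring

lemma exists_measure_Ioi_eq_zero_of_kTC_eq {ν μ : Measure ℝ} [IsProbabilityMeasure ν]
    [IsProbabilityMeasure μ] {b r : ℝ} (hr : 0 ≤ r) (hb : ν (Ioi b) = 0)
    (hK : ∀ z : ℂ, 0 < z.im → kTC μ z = r * kTC ν z) : ∃ c, μ (Ioi c) = 0 := by
  refine ⟨max (b + 1) (r * b + 2), measure_Ioi_eq_zero_of_forall_measure_Ioc fun R hR => ?_⟩
  have hg : 0 < cauchyT ν R := cauchyT_pos_s12 hb (by linarith [le_max_left (b + 1) (r * b + 2)])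
  set K := |1 - r| + r * (2 / cauchyT ν R ^ 2)
  refine measure_Ioc_eq_zero_of_measureReal_Ioo_le (C := 2 * K)
    (y₀ := min (cauchyT ν R / 2) (K + 1)⁻¹) (by positivity) fun t ht y hy => ?_
  have hbt : b + 1 ≤ t := (le_max_left _ _).trans ht.1
  have hrbt : r * b + 2 ≤ t := (le_max_right _ _).trans ht.1
  have hyK : K * y ≤ 1 := by
    have := mul_le_mul_of_nonneg_left (hy.2.trans (min_le_right _ _)) (by positivity : 0 ≤ K + 1)
    rw [mul_inv_cancel₀ (by positivity)] at this
    nlinarith [hy.1]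
  have hw : 2 ≤ t - r * kT ν t := by nlinarith [kT_le hb (by linarith : b < t)]
  have hWw := norm_inv_cauchyTC_sub_le_of_kTC_eq hr hb hK hbt ht.2 hy.1
    (hy.2.trans (min_le_left _ _))
  have him : -(cauchyTC μ (t + y * I)).im ≤ K * y := by
    have := neg_im_inv_le_norm_sub _ _ (by linarith : 1 + _ ≤ t - r * kT ν t)
    rw [inv_inv] at this
    linarith
  calc μ.real (Ioo (t - y) (t + y)) ≤ 2 * y * -(cauchyTC μ (t + y * I)).im := by
        rw [neg_im_cauchyTC t hy.1]
        exact measureReal_Ioo_le_integral_poisson t hy.1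
    _ ≤ 2 * y * (K * y) := by gcongr; linarith [hy.1]
    _ = 2 * K * y ^ 2 := by ring

lemma mul_pseudoVar_div_eq {ψ ψ' : ℝ → ℝ} {α m : ℝ} (hα : α ≠ 0) (h : ψ' (m / α) = ψ m) :
    α * pseudoVar ψ' (m / α) = pseudoVar ψ m + (1 - 1 / α) * m ^ 2 := by
  rw [pseudoVar, pseudoVar, h]
  field_simp
  ring

noncomputable def varianceFun (ψ : ℝ → ℝ) (m₀ m : ℝ) : ℝ := pseudoVar ψ m / m * (m - m₀)

lemma pseudoVar_div_eq_varianceFun_div {ψ : ℝ → ℝ} {m₀ m : ℝ} (hm : m₀ < m) :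
    pseudoVar ψ m / m = varianceFun ψ m₀ m / (m - m₀) := by
  rw [varianceFun, mul_div_cancel_right₀ _ (sub_ne_zero.2 hm.ne')]

lemma varianceFun_eq_of_pseudoVar_eq {ψ ψ' : ℝ → ℝ} {k m₀ m : ℝ}
    (h : pseudoVar ψ' m = pseudoVar ψ m + k * m ^ 2) :
    varianceFun ψ' m₀ m = varianceFun ψ m₀ m + k * m * (m - m₀) := by
  rcases eq_or_ne m 0 with rfl | hm
  · simp [varianceFun]
  · rw [varianceFun, varianceFun, h]
    field_simp

theorem boolean_then_free_power_variance_general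
    (ν μ σ : Measure ℝ)
    [IsProbabilityMeasure ν] [IsProbabilityMeasure μ]
    (hnd : ∀ a : ℝ, ν ≠ Measure.dirac a)
    (b : ℝ) (hb : ν (Set.Ioi b) = 0)
    (α : ℝ) (hα : 0 < α)
    (m0 : ℝ) (hm0 : Tendsto (kMean ν) (𝓝[>] (0 : ℝ)) (𝓝 m0))
    (ψν ψμ ψσ : ℝ → ℝ)
    (hψν : ∀ θ : ℝ, 0 < θ → θ * Bv ν < 1 → ψν (kMean ν θ) = θ)
    (hψμ : ∀ θ : ℝ, 0 < θ → θ * Bv μ < 1 → ψμ (kMean μ θ) = θ)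
    -- `μ = ν^{⊎(1/α)}`:
    (hK : ∀ z : ℂ, 0 < z.im → kTC μ z = ((1 / α : ℝ) : ℂ) * kTC ν z)
    (m0μ : ℝ) (hm0μ : Tendsto (kMean μ) (𝓝[>] (0 : ℝ)) (𝓝 m0μ))
    -- `σ = μ^{⊞α}`:
    (hσsupp : ∃ c : ℝ, σ (Set.Ioi c) = 0)
    (hσfree : ∃ ε > 0, ∀ m : ℝ, α * m0μ < m → m < α * m0μ + ε →
      pseudoVar ψσ m = α * pseudoVar ψμ (m / α)) :
    (∃ c : ℝ, σ (Set.Ioi c) = 0) ∧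
    (∃ ε > 0, ∀ m : ℝ, m0 < m → m < m0 + ε →
      pseudoVar ψσ m = pseudoVar ψν m + (1 - 1 / α) * m ^ 2) ∧
    (∃ ε > 0, ∃ Vν Vσ : ℝ → ℝ,
      (∀ m : ℝ, m0 < m → m < m0 + ε →
        pseudoVar ψν m / m = Vν m / (m - m0)) ∧
      (∀ m : ℝ, m0 < m → m < m0 + ε →
        pseudoVar ψσ m / m = Vσ m / (m - m0)) ∧
      (∀ m : ℝ, m0 < m → m < m0 + ε →
        Vσ m = Vν m + (1 - 1 / α) * m * (m - m0))) := by
  obtain ⟨cμ, hcμ⟩ := exists_measure_Ioi_eq_zero_of_kTC_eq (by positivity) hb hK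
  set c := max 1 (max b cμ)
  have hc : 0 < c := one_pos.trans_le (le_max_left _ _)
  have hνc : ν (Ioi c) = 0 :=
    measure_mono_null (Ioi_subset_Ioi ((le_max_left _ _).trans (le_max_right _ _))) hb
  have hμc : μ (Ioi c) = 0 :=
    measure_mono_null (Ioi_subset_Ioi ((le_max_right _ _).trans (le_max_right _ _))) hcμ
  have hcθ : ∀ θ ∈ Ioo 0 c⁻¹, c < θ⁻¹ := fun θ hθ => (lt_inv_comm₀ hθ.1 hc).1 hθ.2
  have hkμ : ∀ θ ∈ Ioo 0 c⁻¹, kMean μ θ = 1 / α * kMean ν θ := fun θ hθ =>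
    kMean_eq_mul_of_kTC_eq hK hνc hμc hθ.1 (hcθ θ hθ)
  have hm0μ' : α * m0μ = m0 := by
    rw [tendsto_nhds_unique hm0μ ((hm0.const_mul (1 / α)).congr' (by
      filter_upwards [Ioo_mem_nhdsGT (inv_pos.2 hc)] with θ hθ using (hkμ θ hθ).symm))]
    field_simp
  obtain ⟨ε₁, hε₁, hsurj⟩ := (strictMonoOn_kMean hnd hνc hc).exists_eq_of_tendsto_nhdsGT
    (inv_pos.2 hc) (continuousOn_kMean hνc hc) hm0
  obtain ⟨ε₂, hε₂, hfree⟩ := hσfree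
  rw [hm0μ'] at hfree
  have hpseudo : ∀ m, m0 < m → m < m0 + min ε₁ ε₂ →
      pseudoVar ψσ m = pseudoVar ψν m + (1 - 1 / α) * m ^ 2 := by
    intro m hm₁ hm₂
    obtain ⟨θ, hθ, rfl⟩ := hsurj m hm₁ (by linarith [min_le_left ε₁ ε₂])
    rw [hfree _ hm₁ (by linarith [min_le_right ε₁ ε₂])]
    refine mul_pseudoVar_div_eq hα.ne' ?_
    rw [← one_div_mul_eq_div, ← hkμ θ hθ, hψμ θ hθ.1 (mul_Bv_lt_one hμc hθ.1 (hcθ θ hθ)),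
      hψν θ hθ.1 (mul_Bv_lt_one hνc hθ.1 (hcθ θ hθ))]
  exact ⟨hσsupp, ⟨_, lt_min hε₁ hε₂, hpseudo⟩, _, lt_min hε₁ hε₂, varianceFun ψν m0,
    varianceFun ψσ m0, fun m hm _ => pseudoVar_div_eq_varianceFun_div hm,
    fun m hm _ => pseudoVar_div_eq_varianceFun_div hm,
    fun m hm₁ hm₂ => varianceFun_eq_of_pseudoVar_eq (hpseudo m hm₁ hm₂)⟩

/-- let `ν` be a non-degenerate probability measure with support bounded
from above, `α > 0`, `μ = ν^{⊎(1/α)}` the boolean convolution power (characterized by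
`K_μ = (1/α) K_ν` on the upper half-plane), and `σ = μ^{⊞α} = (ν^{⊎1/α})^{⊞α}` the
free convolution power (encoded through its defining properties: support bounded from
above, `m₀(σ) = α m₀(μ)`, and pseudo-variance `𝕍_σ(m) = α 𝕍_μ(m/α)` near `α m₀(μ)`).
Then `σ` has support bounded from above, `𝕍_σ(m) = 𝕍_ν(m) + (1 - 1/α) m²` in a right
neighborhood of `m₀(ν)`, and (the mean `m₀ = m₀(ν)` being finite) the variance
functions exist and `V_σ(m) = V_ν(m) + (1 - 1/α) m (m - m₀)` in a right neighborhood
of `m₀`. -/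
theorem boolean_then_free_power_variance
    (ν μ σ : Measure ℝ)
    [IsProbabilityMeasure ν] [IsProbabilityMeasure μ] [IsProbabilityMeasure σ]
    (hnd : ∀ a : ℝ, ν ≠ Measure.dirac a)
    (b : ℝ) (hb : ν (Set.Ioi b) = 0)
    (α : ℝ) (hα : 0 < α)
    (m0 : ℝ) (hm0 : Tendsto (kMean ν) (𝓝[>] (0 : ℝ)) (𝓝 m0))
    (ψν ψμ ψσ : ℝ → ℝ)
    (hψν : ∀ θ : ℝ, 0 < θ → θ * Bv ν < 1 → ψν (kMean ν θ) = θ)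
    (hψμ : ∀ θ : ℝ, 0 < θ → θ * Bv μ < 1 → ψμ (kMean μ θ) = θ)
    (hψσ : ∀ θ : ℝ, 0 < θ → θ * Bv σ < 1 → ψσ (kMean σ θ) = θ)
    -- `μ = ν^{⊎(1/α)}`:
    (hK : ∀ z : ℂ, 0 < z.im → kTC μ z = ((1 / α : ℝ) : ℂ) * kTC ν z)
    (m0μ : ℝ) (hm0μ : Tendsto (kMean μ) (𝓝[>] (0 : ℝ)) (𝓝 m0μ))
    -- `σ = μ^{⊞α}`:
    (hσsupp : ∃ c : ℝ, σ (Set.Ioi c) = 0)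
    (hσmean : Tendsto (kMean σ) (𝓝[>] (0 : ℝ)) (𝓝 (α * m0μ)))
    (hσfree : ∃ ε > 0, ∀ m : ℝ, α * m0μ < m → m < α * m0μ + ε →
      pseudoVar ψσ m = α * pseudoVar ψμ (m / α)) :
    (∃ c : ℝ, σ (Set.Ioi c) = 0) ∧
    (∃ ε > 0, ∀ m : ℝ, m0 < m → m < m0 + ε →
      pseudoVar ψσ m = pseudoVar ψν m + (1 - 1 / α) * m ^ 2) ∧
    (∃ ε > 0, ∃ Vν Vσ : ℝ → ℝ,
      (∀ m : ℝ, m0 < m → m < m0 + ε →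
        pseudoVar ψν m / m = Vν m / (m - m0)) ∧
      (∀ m : ℝ, m0 < m → m < m0 + ε →
        pseudoVar ψσ m / m = Vσ m / (m - m0)) ∧
      (∀ m : ℝ, m0 < m → m < m0 + ε →
        Vσ m = Vν m + (1 - 1 / α) * m * (m - m0))) :=
  boolean_then_free_power_variance_general ν μ σ hnd b hb α hα m0 hm0 ψν ψμ ψσ hψν hψμ hK m0μ hm0μ
    hσsupp hσfree
end
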